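/- With c₂ = λ_max(M + ((n−τ)/τ)Diag(M)) and c₃ = λ_max(M) + δ where δ = Trace-constrained parameter satisfying δ ≤ Trace(M)/τ and M symmetric PSD with positive diagonal, 1 ≤ τ < n, we have c₃ ≤ ((2n−τ)/(n−τ)) c₂. -/

import Mathlib

/-!
Write `S = M + c • Diag(M)` with `c = (n - τ) / τ > 0` and `K = λ_max(S)`. Since `c • Diag(M)` is
positive semidefinite, `M ≤ S` in the Loewner order, so `λ_max(M) ≤ K`. The diagonal entries of
a symmetric matrix are bounded by its top eigenvalue, so `(1 + c) Mᵢᵢ ≤ K` and in particular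
`c Mᵢᵢ ≤ K`; summing over `i` gives `δ ≤ Trace(M)/τ ≤ n K / (c τ) = n K / (n - τ)`. Adding the two
bounds gives `λ_max(M) + δ ≤ (1 + n/(n - τ)) K = ((2n - τ)/(n - τ)) K`.
-/

/-- The largest eigenvalue of a real matrix, as the supremum of its eigenvalue set. -/
noncomputable def lamMax {n : ℕ} (M : Matrix (Fin n) (Fin n) ℝ) : ℝ :=
  sSup {r : ℝ | ∃ v : Fin n → ℝ, v ≠ 0 ∧ M.mulVec v = r • v}

open Matrix
open scoped MatrixOrder

theorem Matrix.mem_spectrum_iff_exists_mulVec_eq_smul {ι K : Type*} [Fintype ι] [DecidableEq ι]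
    [Field K] {A : Matrix ι ι K} {r : K} :
    r ∈ spectrum K A ↔ ∃ v, v ≠ 0 ∧ A *ᵥ v = r • v := by
  rw [← spectrum_toLin', ← Module.End.hasEigenvalue_iff_mem_spectrum, Module.End.hasEigenvalue_iff,
    Submodule.ne_bot_iff]
  simp only [Module.End.mem_eigenspace_iff, toLin'_apply]
  exact exists_congr fun v => and_comm

section lamMax

variable {n : ℕ} {A B : Matrix (Fin n) (Fin n) ℝ}

theorem lamMax_eq_sSup_spectrum (A : Matrix (Fin n) (Fin n) ℝ) :
    lamMax A = sSup (spectrum ℝ A) := by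
  rw [lamMax]
  congr 1
  ext r
  exact mem_spectrum_iff_exists_mulVec_eq_smul.symm

theorem le_algebraMap_lamMax (hA : A.IsHermitian) : A ≤ algebraMap ℝ _ (lamMax A) := by
  rw [le_algebraMap_iff_spectrum_le (ha := hA.isSelfAdjoint), lamMax_eq_sSup_spectrum]
  exact fun x hx => le_csSup A.finite_real_spectrum.bddAbove hx

theorem diag_le_lamMax (hA : A.IsHermitian) (i : Fin n) : A i i ≤ lamMax A := by
  have h : 0 ≤ (algebraMap ℝ _ (lamMax A) - A) i i := (le_algebraMap_lamMax hA).diag_nonneg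
  simpa [Algebra.algebraMap_eq_smul_one] using h

theorem lamMax_mono (hn : 0 < n) (hB : B.IsHermitian) (h : A ≤ B) : lamMax A ≤ lamMax B := by
  have hA : A.IsHermitian := by simpa using hB.sub h.isHermitian
  have hne : (spectrum ℝ A).Nonempty := by
    rw [hA.spectrum_real_eq_range_eigenvalues]
    exact Set.range_nonempty_iff_nonempty.mpr ⟨⟨0, hn⟩⟩
  rw [lamMax_eq_sSup_spectrum A]
  exact csSup_le hne <| (le_algebraMap_iff_spectrum_le (ha := hA.isSelfAdjoint)).mp
    (h.trans (le_algebraMap_lamMax hB))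

end lamMax

theorem c3_le_c2_general
    (n : ℕ) (hn : 0 < n)
    (M : Matrix (Fin n) (Fin n) ℝ) (hM : M.PosSemidef)
    (τ : ℝ) (hτ1 : 1 ≤ τ) (hτn : τ < n)
    (δ : ℝ) (hδ : δ ≤ Matrix.trace M / τ) :
    lamMax M + δ ≤
      ((2 * (n : ℝ) - τ) / ((n : ℝ) - τ)) *
        lamMax (M + (((n : ℝ) - τ) / τ) • Matrix.diagonal (fun i => M i i)) := by
  have hτ : 0 < τ := zero_lt_one.trans_le hτ1
  have hnτ : 0 < (n : ℝ) - τ := sub_pos.mpr hτn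
  set c := ((n : ℝ) - τ) / τ
  have hc : 0 < c := div_pos hnτ hτ
  set S := M + c • Matrix.diagonal (fun i => M i i)
  have hD : 0 ≤ c • Matrix.diagonal (fun i => M i i) := by
    rw [← diagonal_smul, nonneg_iff_posSemidef, posSemidef_diagonal_iff]
    exact fun i => mul_nonneg hc.le hM.diag_nonneg
  have hS : S.IsHermitian := hM.isHermitian.add (nonneg_iff_posSemidef.mp hD).isHermitian
  have hdiag (i : Fin n) : M i i ≤ lamMax S / c := by
    rw [le_div_iff₀ hc]
    have hSii : S i i = M i i + c * M i i := by simp [S]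
    nlinarith [diag_le_lamMax hS i, hM.diag_nonneg (i := i)]
  have htrace : trace M ≤ n * (lamMax S / c) := by
    simpa [trace] using Finset.sum_le_card_nsmul Finset.univ _ _ fun i _ => hdiag i
  calc lamMax M + δ ≤ lamMax S + n * (lamMax S / c) / τ :=
        add_le_add (lamMax_mono hn hS (le_add_of_nonneg_right hD))
          (hδ.trans (div_le_div_of_nonneg_right htrace hτ.le))
    _ = ((2 * (n : ℝ) - τ) / ((n : ℝ) - τ)) * lamMax S := by
        simp only [c]
        field_simp
        ring

/-- Comparison of the complexity constants `c₂ = λ_max(M + ((n−τ)/τ)Diag(M))` and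
`c₃ = λ_max(M) + δ` with `δ ≤ Trace(M)/τ`: `c₃ ≤ ((2n−τ)/(n−τ)) c₂`. -/
theorem c3_le_c2
    (n : ℕ) (hn : 0 < n)
    (M : Matrix (Fin n) (Fin n) ℝ) (hM : M.PosSemidef) (hMdiag : ∀ i, 0 < M i i)
    (τ : ℝ) (hτ1 : 1 ≤ τ) (hτn : τ < n)
    (δ : ℝ) (hδ0 : 0 < δ) (hδ : δ ≤ Matrix.trace M / τ) :
    lamMax M + δ ≤
      ((2 * (n : ℝ) - τ) / ((n : ℝ) - τ)) *
        lamMax (M + (((n : ℝ) - τ) / τ) • Matrix.diagonal (fun i => M i i)) :=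
  c3_le_c2_general n hn M hM τ hτ1 hτn δ hδ
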